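/- Let A be a unital algebra over ℂ, M a unital A-bimodule, and m, n positive integers with m ≠ n. Suppose J is a two-sided ideal of A contained in the subalgebra generated by the idempotents of A, and J is a right separating set of M (i.e., J·x = {0} implies x = 0 for x ∈ M). If δ : A → M is an (m,n)-Jordan derivable mapping at zero with δ(1) = 0, then δ = 0. -/

import Mathlib

open MulOpposite

/-!
Multiplying a relation `c • x = a • (x P) + b • (P x)` by an idempotent `P` on the left, on the
right and on both sides forces `P x = x P = 0` as soon as `c ∉ {a, b, a + b}`. The zero-product
identity for the orthogonal pairs `(P, 1 - P)` and `(P, (1 - P) a (1 - P))` yields such relations,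
giving `δ P = 0` (from `m ≠ n`) and `P • δ ((1 - P) a (1 - P)) = 0` (from `m, n ≠ 0`). Since
`P + P a (1 - P)` is again idempotent, `δ` also kills `P a (1 - P)`, and the Peirce decomposition
then gives `δ (P a) = P • δ a`. This rule passes to the subring generated by idempotents, so for
`S ∈ J` we get `S • δ a = δ (S a) = (S a) • δ 1 = 0`.
-/

theorem IsIdempotentElem.add_mul_mul_one_sub {A : Type*} [Ring A] {P : A}
    (hP : IsIdempotentElem P) (a : A) : IsIdempotentElem (P + P * a * (1 - P)) := by
  have hQP (x : A) : (1 - P) * (P * x) = 0 := by rw [← mul_assoc, hP.one_sub_mul_self, zero_mul]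
  simp only [isIdempotentElem_iff, add_mul, mul_add, mul_assoc, hP.eq, hP.mul_self_mul, hQP,
    hP.one_sub_mul_self, mul_zero, add_zero]

section

variable {A M : Type*} [Ring A] [AddCommGroup M] [Module A M] [Module Aᵐᵒᵖ M]

def IsJordanDerivableAtZero (m n : ℕ) (δ : A →+ M) : Prop :=
  ∀ X Y : A, X * Y = 0 → Y * X = 0 →
    (m + n) • δ (X * Y + Y * X) =
      (2 * m) • (op Y • δ X) + (2 * m) • (op X • δ Y) + (2 * n) • (X • δ Y) + (2 * n) • (Y • δ X)

theorem IsJordanDerivableAtZero.eq_zero_of_mul_eq_zero {m n : ℕ} {δ : A →+ M}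
    (hδ : IsJordanDerivableAtZero m n δ) {X Y : A} (hXY : X * Y = 0) (hYX : Y * X = 0) :
    (2 * m) • (op Y • δ X) + (2 * m) • (op X • δ Y) + (2 * n) • (X • δ Y) + (2 * n) • (Y • δ X)
      = 0 := by
  simpa [hXY, hYX] using (hδ X Y hXY hYX).symm

variable [SMulCommClass A Aᵐᵒᵖ M] [IsAddTorsionFree M]

theorem IsIdempotentElem.smul_eq_zero_and_op_smul_eq_zero_of_zsmul_eq {P : A}
    (hP : IsIdempotentElem P) {a b c : ℤ} (hca : c ≠ a) (hcb : c ≠ b) (hcab : c ≠ a + b)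
    {x : M} (hx : c • x = a • (op P • x) + b • (P • x)) :
    P • x = 0 ∧ op P • x = 0 := by
  have cancel {d : ℤ} {y : M} (hcd : c ≠ d) (h : c • y = d • y) : y = 0 :=
    (IsAddTorsionFree.zsmul_eq_zero_iff_right (sub_ne_zero.2 hcd)).1
      (by rw [sub_smul, h, sub_self])
  have hPP (y : M) : P • P • y = P • y := by rw [smul_smul, hP.eq]
  have hPP' (y : M) : op P • op P • y = op P • y := by rw [smul_smul, ← op_mul, hP.eq]
  have hl := congr(P • $hx)
  have hr := congr(op P • $hx)
  have hlr := congr(op P • $hl)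
  simp only [smul_add, smul_comm _ (_ : ℤ), hPP, hPP', smul_comm P (op P)] at hl hr hlr
  have hw : op P • P • x = 0 := cancel hcab (by rw [add_smul]; exact hlr)
  rw [hw, smul_zero, zero_add] at hl
  rw [hw, smul_zero, add_zero] at hr
  exact ⟨cancel hcb hl, cancel hca hr⟩

namespace IsJordanDerivableAtZero

variable {m n : ℕ} {δ : A →+ M}

theorem map_eq_zero_of_isIdempotentElem (hδ : IsJordanDerivableAtZero m n δ) (hmn : m ≠ n)
    (hδ1 : δ 1 = 0) {P : A} (hP : IsIdempotentElem P) : δ P = 0 := by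
  have hδQ : δ (1 - P) = -δ P := by rw [map_sub, hδ1, zero_sub]
  have h := hδ.eq_zero_of_mul_eq_zero hP.mul_one_sub_self hP.one_sub_mul_self
  simp only [hδQ, op_sub, op_one, sub_smul, one_smul, smul_neg] at h
  have hPeirce :
      (2 * m + 2 * n : ℤ) • δ P = (4 * m : ℤ) • (op P • δ P) + (4 * n : ℤ) • (P • δ P) := by
    generalize op P • δ P = uP at h ⊢
    generalize P • δ P = Pu at h ⊢
    linear_combination (norm := module) h
  obtain ⟨hl, hr⟩ := hP.smul_eq_zero_and_op_smul_eq_zero_of_zsmul_eq (by omega) (by omega)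
    (by omega) hPeirce
  rw [hl, hr, smul_zero, smul_zero, add_zero] at hPeirce
  exact (IsAddTorsionFree.zsmul_eq_zero_iff_right (by omega)).1 hPeirce

theorem smul_map_eq_zero_of_mul_eq_zero (hδ : IsJordanDerivableAtZero m n δ) (hm : m ≠ 0)
    (hn : n ≠ 0) (hmn : m ≠ n) (hδ1 : δ 1 = 0) {P X : A} (hP : IsIdempotentElem P)
    (hPX : P * X = 0) (hXP : X * P = 0) : P • δ X = 0 := by
  have h := hδ.eq_zero_of_mul_eq_zero hPX hXP
  simp only [hδ.map_eq_zero_of_isIdempotentElem hmn hδ1 hP, smul_zero, add_zero, zero_add] at h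
  have hPeirce : (0 : ℤ) • δ X = (2 * m : ℤ) • (op P • δ X) + (2 * n : ℤ) • (P • δ X) := by
    generalize op P • δ X = XP at h ⊢
    generalize P • δ X = PX at h ⊢
    linear_combination (norm := module) -h
  exact (hP.smul_eq_zero_and_op_smul_eq_zero_of_zsmul_eq (by omega) (by omega) (by omega)
    hPeirce).1

theorem map_mul_mul_one_sub_eq_zero (hδ : IsJordanDerivableAtZero m n δ) (hmn : m ≠ n)
    (hδ1 : δ 1 = 0) {P : A} (hP : IsIdempotentElem P) (a : A) : δ (P * a * (1 - P)) = 0 := by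
  have h := hδ.map_eq_zero_of_isIdempotentElem hmn hδ1 (hP.add_mul_mul_one_sub a)
  rwa [map_add, hδ.map_eq_zero_of_isIdempotentElem hmn hδ1 hP, zero_add] at h

theorem map_mul_eq_map_mul_mul_self (hδ : IsJordanDerivableAtZero m n δ) (hmn : m ≠ n)
    (hδ1 : δ 1 = 0) {P : A} (hP : IsIdempotentElem P) (a : A) : δ (P * a) = δ (P * a * P) := by
  rw [← add_zero (δ (P * a * P)), ← hδ.map_mul_mul_one_sub_eq_zero hmn hδ1 hP a, ← map_add,
    ← mul_add, add_sub_cancel, mul_one]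

theorem map_mul_eq_smul_of_isIdempotentElem (hδ : IsJordanDerivableAtZero m n δ) (hm : m ≠ 0)
    (hn : n ≠ 0) (hmn : m ≠ n) (hδ1 : δ 1 = 0) {P : A} (hP : IsIdempotentElem P) (a : A) :
    δ (P * a) = P • δ a := by
  have hQ := hP.one_sub
  have hQaQ : P • δ ((1 - P) * a * (1 - P)) = 0 :=
    hδ.smul_map_eq_zero_of_mul_eq_zero hm hn hmn hδ1 hP
      (by rw [← mul_assoc, ← mul_assoc, hP.mul_one_sub_self, zero_mul, zero_mul])
      (by rw [mul_assoc, hP.one_sub_mul_self, mul_zero])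
  have hPaP : (1 - P) • δ (P * a * P) = 0 :=
    hδ.smul_map_eq_zero_of_mul_eq_zero hm hn hmn hδ1 hQ
      (by rw [← mul_assoc, ← mul_assoc, hP.one_sub_mul_self, zero_mul, zero_mul])
      (by rw [mul_assoc, hP.mul_one_sub_self, mul_zero])
  calc δ (P * a) = δ (P * a * P) := hδ.map_mul_eq_map_mul_mul_self hmn hδ1 hP a
    _ = P • δ (P * a * P) := by rwa [sub_smul, one_smul, sub_eq_zero] at hPaP
    _ = P • δ (P * a) + P • δ ((1 - P) * a) := by
      rw [hδ.map_mul_eq_map_mul_mul_self hmn hδ1 hP a,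
        hδ.map_mul_eq_map_mul_mul_self hmn hδ1 hQ a, hQaQ, add_zero]
    _ = P • δ a := by rw [← smul_add, ← map_add, ← add_mul, add_sub_cancel, one_mul]

theorem map_mul_eq_smul_of_mem_closure (hδ : IsJordanDerivableAtZero m n δ) (hm : m ≠ 0)
    (hn : n ≠ 0) (hmn : m ≠ n) (hδ1 : δ 1 = 0) {S : A}
    (hS : S ∈ Subring.closure {P : A | IsIdempotentElem P}) (a : A) : δ (S * a) = S • δ a := by
  induction hS using Subring.closure_induction generalizing a with
  | mem P hP => exact hδ.map_mul_eq_smul_of_isIdempotentElem hm hn hmn hδ1 hP a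
  | zero => rw [zero_mul, map_zero, zero_smul]
  | one => rw [one_mul, one_smul]
  | add x y _ _ hx hy => rw [add_mul, map_add, hx, hy, add_smul]
  | neg x _ hx => rw [neg_mul, map_neg, hx, neg_smul]
  | mul x y _ _ hx hy => rw [mul_assoc, hx, hy, mul_smul]

end IsJordanDerivableAtZero

end

theorem mn_jordan_derivable_at_zero_eq_zero_of_right_separating_general
    {A M : Type*} [Ring A]
    [AddCommGroup M] [Module ℂ M] [Module A M] [Module Aᵐᵒᵖ M]
    [SMulCommClass A Aᵐᵒᵖ M]
    (m n : ℕ) (hm : 0 < m) (hn : 0 < n) (hmn : m ≠ n)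
    (δ : A → M) (hadd : ∀ a b : A, δ (a + b) = δ a + δ b)
    (hδ1 : δ 1 = 0)
    (hzero : ∀ X Y : A, X * Y = 0 → Y * X = 0 →
      (m + n) • δ (X * Y + Y * X) =
        (2 * m) • (op Y • δ X) + (2 * m) • (op X • δ Y)
          + (2 * n) • (X • δ Y) + (2 * n) • (Y • δ X))
    (J : TwoSidedIdeal A)
    (hJsub : (J : Set A) ⊆ (Subring.closure {P : A | P * P = P} : Set A))
    (hsep : ∀ x : M, (∀ S ∈ J, S • x = 0) → x = 0) :
    ∀ a : A, δ a = 0 := by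
  have : IsAddTorsionFree M := .of_isTorsionFree ℂ M
  let δ' : A →+ M := .mk' δ hadd
  have hδ : IsJordanDerivableAtZero m n δ' := hzero
  have hδ'1 : δ' 1 = 0 := hδ1
  have hJ : (J : Set A) ⊆ Subring.closure {P : A | IsIdempotentElem P} := hJsub
  have hδ'J {S : A} (hS : S ∈ J) (a : A) : δ' (S * a) = S • δ' a :=
    hδ.map_mul_eq_smul_of_mem_closure hm.ne' hn.ne' hmn hδ'1 (hJ hS) a
  intro a
  refine hsep _ fun S hS => ?_
  calc S • δ a = δ' (S * a * 1) := by rw [mul_one, hδ'J hS]; rfl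
    _ = 0 := by rw [hδ'J (J.mul_mem_right S a hS), hδ'1, smul_zero]

/-- If a two-sided ideal `J` contained in the subring generated by
idempotents is a right separating set of `M`, then every `(m,n)`-Jordan derivable
mapping at zero with `δ 1 = 0` vanishes. -/
theorem mn_jordan_derivable_at_zero_eq_zero_of_right_separating
    {A M : Type*} [Ring A] [Algebra ℂ A]
    [AddCommGroup M] [Module ℂ M] [Module A M] [Module Aᵐᵒᵖ M]
    [SMulCommClass A Aᵐᵒᵖ M]
    (m n : ℕ) (hm : 0 < m) (hn : 0 < n) (hmn : m ≠ n)
    (δ : A → M) (hadd : ∀ a b : A, δ (a + b) = δ a + δ b)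
    (hδ1 : δ 1 = 0)
    (hzero : ∀ X Y : A, X * Y = 0 → Y * X = 0 →
      (m + n) • δ (X * Y + Y * X) =
        (2 * m) • (op Y • δ X) + (2 * m) • (op X • δ Y)
          + (2 * n) • (X • δ Y) + (2 * n) • (Y • δ X))
    (J : TwoSidedIdeal A)
    (hJsub : (J : Set A) ⊆ (Subring.closure {P : A | P * P = P} : Set A))
    (hsep : ∀ x : M, (∀ S ∈ J, S • x = 0) → x = 0) :
    ∀ a : A, δ a = 0 :=
  mn_jordan_derivable_at_zero_eq_zero_of_right_separating_general m n hm hn hmn δ hadd hδ1 hzero J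
    hJsub hsep
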